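/- Let M = (Q, A, τ) be an invertible Mealy automaton and let M̃ be its enriched automaton. Then for all u, v ∈ A*, the following are equivalent: (i) s@u = s@v for all s ∈ Q* (actions of M); (ii) s@u = s@v for all words s over Q ⊔ Q⁻¹ (actions of M̃). Consequently the dual automaton semigroups coincide: D_M = D_M̃. -/

import Mathlib

namespace AutGrp

/-- A Mealy automaton with state set `Q` and alphabet `A`:
`step q a = (q · a, q @ a)` (output letter, next state). -/
structure Mealy (Q A : Type*) where
  step : Q → A → A × Q

namespace Mealy

variable {Q A : Type*}

/-- The output letter `q · a`. -/
def o (M : Mealy Q A) (q : Q) (a : A) : A := (M.step q a).1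

/-- The next state `q @ a`. -/
def t (M : Mealy Q A) (q : Q) (a : A) : Q := (M.step q a).2

/-- Action of a single state on a word of letters: `q · w`. -/
def actA (M : Mealy Q A) : Q → List A → List A
  | _, [] => []
  | q, a :: w => M.o q a :: M.actA (M.t q a) w

/-- State reached from `q` after reading the word `w`: `q @ w`. -/
def stA (M : Mealy Q A) : Q → List A → Q
  | q, [] => q
  | q, a :: w => M.stA (M.t q a) w

/-- Action of a word of states on a word of letters: `s · u` (rightmost state acts first). -/
def actW (M : Mealy Q A) : List Q → List A → List A
  | [], u => u
  | q :: s, u => M.actA q (M.actW s u)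

/-- Word of states reached after reading `u`: `s @ u`. -/
def stW (M : Mealy Q A) : List Q → List A → List Q
  | [], _ => []
  | q :: s, u => M.stA q (M.actW s u) :: M.stW s u

/-- `M` is invertible if each state acts on `A` by a bijection. -/
def Invertible (M : Mealy Q A) : Prop := ∀ q : Q, Function.Bijective (M.o q)

/-- `M` is reversible if each letter acts on `Q` by a bijection. -/
def Reversible (M : Mealy Q A) : Prop := ∀ a : A, Function.Bijective (fun q => M.t q a)

theorem actA_append (M : Mealy Q A) (q : Q) (x y : List A) :
    M.actA q (x ++ y) = M.actA q x ++ M.actA (M.stA q x) y := by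
  induction x generalizing q with
  | nil => simp [actA, stA]
  | cons a w ih => simp [actA, stA, ih]

theorem stA_append (M : Mealy Q A) (q : Q) (x y : List A) :
    M.stA q (x ++ y) = M.stA (M.stA q x) y := by
  induction x generalizing q with
  | nil => simp [stA]
  | cons a w ih => simp [stA, ih]

theorem actW_append_states (M : Mealy Q A) (s u : List Q) (w : List A) :
    M.actW (s ++ u) w = M.actW s (M.actW u w) := by
  induction s with
  | nil => simp [actW]
  | cons q s ih => simp [actW, ih]

theorem actW_append (M : Mealy Q A) (s : List Q) (x y : List A) :
    M.actW s (x ++ y) = M.actW s x ++ M.actW (M.stW s x) y := by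
  induction s with
  | nil => simp [actW, stW]
  | cons q s ih => simp [actW, stW, ih, actA_append]

theorem stW_append (M : Mealy Q A) (s : List Q) (x y : List A) :
    M.stW s (x ++ y) = M.stW (M.stW s x) y := by
  induction s with
  | nil => simp [stW]
  | cons q s ih => simp [stW, actW, ih, actW_append, stA_append]

theorem actW_stW_congr (M : Mealy Q A) {p p' : List Q}
    (h : ∀ w : List A, M.actW p w = M.actW p' w) (u w : List A) :
    M.actW (M.stW p u) w = M.actW (M.stW p' u) w := by
  have h1 := M.actW_append p u w
  have h2 := M.actW_append p' u w
  rw [h u, h (u ++ w)] at h1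
  rw [h1] at h2
  exact List.append_cancel_left h2

/-- The congruence `~Q` on the free monoid `Q*`: two words of states are equivalent
iff they act identically on `A*`. -/
def conQ (M : Mealy Q A) : Con (FreeMonoid Q) where
  r s u := ∀ w : List A, M.actW s.toList w = M.actW u.toList w
  iseqv := ⟨fun _ _ => rfl, fun h w => (h w).symm, fun h1 h2 w => (h1 w).trans (h2 w)⟩
  mul' := by
    intro a b c d h1 h2 w
    simp only [FreeMonoid.toList_mul, actW_append_states]
    rw [h2 w, h1 (M.actW d.toList w)]

/-- The congruence `~A` on the free monoid `A*`: `u ~A v` iff `s @ u = s @ v` for all `s ∈ Q*`. -/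
def conA (M : Mealy Q A) : Con (FreeMonoid A) where
  r u v := ∀ s : List Q, M.stW s u.toList = M.stW s v.toList
  iseqv := ⟨fun _ _ => rfl, fun h s => (h s).symm, fun h1 h2 s => (h1 s).trans (h2 s)⟩
  mul' := by
    intro a b c d h1 h2 s
    simp only [FreeMonoid.toList_mul, stW_append]
    rw [h1 s, h2 (M.stW s b.toList)]

/-- The congruence `~D` on the free monoid `A*`: `u ~D v` iff `s @ u ~Q s @ v` for all `s ∈ Q*`. -/
def conD (M : Mealy Q A) : Con (FreeMonoid A) where
  r u v := ∀ (s : List Q) (w : List A),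
    M.actW (M.stW s u.toList) w = M.actW (M.stW s v.toList) w
  iseqv := ⟨fun _ _ _ => rfl, fun h s w => (h s w).symm,
    fun h1 h2 s w => (h1 s w).trans (h2 s w)⟩
  mul' := by
    intro a b c d h1 h2 s w
    simp only [FreeMonoid.toList_mul, stW_append]
    calc M.actW (M.stW (M.stW s a.toList) c.toList) w
        = M.actW (M.stW (M.stW s b.toList) c.toList) w :=
          M.actW_stW_congr (h1 s) c.toList w
      _ = M.actW (M.stW (M.stW s b.toList) d.toList) w := h2 _ w

/-- The automaton semigroup (monoid) `P_M = Q* / ~Q`. -/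
abbrev PM (M : Mealy Q A) : Type _ := M.conQ.Quotient

/-- The dual automaton semigroup (monoid) `D_M = A* / ~A`. -/
abbrev DM (M : Mealy Q A) : Type _ := M.conA.Quotient

/-- The monoid `D'_M = A* / ~D`. -/
abbrev DM' (M : Mealy Q A) : Type _ := M.conD.Quotient

/-- The class in `P_M` of a word of states. -/
def PMmk (M : Mealy Q A) (s : List Q) : M.PM := M.conQ.mk' (FreeMonoid.ofList s)

/-- The class in `D_M` of a word of letters. -/
def DMmk (M : Mealy Q A) (u : List A) : M.DM := M.conA.mk' (FreeMonoid.ofList u)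

/-- The class in `D'_M` of a word of letters. -/
def DM'mk (M : Mealy Q A) (u : List A) : M.DM' := M.conD.mk' (FreeMonoid.ofList u)

/-- `M` is self-invertible if `P_M` is a group. -/
def SelfInvertible (M : Mealy Q A) : Prop :=
  ∀ x : M.PM, ∃ y : M.PM, x * y = 1 ∧ y * x = 1

/-- The enriched automaton of an invertible automaton: states `Q ⊕ Q`, where `Sum.inl q` is `q`
and `Sum.inr q` is the formal inverse `q⁻¹`; `τ̃(q,a) = τ(q,a)` and
`τ̃(q⁻¹, q·a) = (a, (q@a)⁻¹)`. -/
noncomputable def enriched [Nonempty A] (M : Mealy Q A) : Mealy (Q ⊕ Q) A where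
  step := fun p b =>
    match p with
    | Sum.inl q => (M.o q b, Sum.inl (M.t q b))
    | Sum.inr q =>
        (Function.invFun (M.o q) b, Sum.inr (M.t q (Function.invFun (M.o q) b)))

/-- The monoid `Δ_M` presented by generators `Q ⊔ A` and relations `q a = (q·a)(q@a)`. -/
def deltaCon (M : Mealy Q A) : Con (FreeMonoid (Q ⊕ A)) :=
  conGen (fun w₁ w₂ => ∃ (q : Q) (a : A),
    w₁ = FreeMonoid.of (Sum.inl q) * FreeMonoid.of (Sum.inr a) ∧
    w₂ = FreeMonoid.of (Sum.inr (M.o q a)) * FreeMonoid.of (Sum.inl (M.t q a)))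

end Mealy

/-- Evaluation of a positive word in the letters `y` (for `true`) and `z` (for `false`). -/
def evalPair {S : Type*} [Monoid S] (y z : S) : List Bool → S
  | [] => 1
  | b :: l => (bif b then y else z) * evalPair y z l

/-- `y` and `z` freely generate a free subsemigroup of rank two: distinct nonempty
positive words in `y, z` represent distinct elements. -/
def IsFreePair {S : Type*} [Monoid S] (y z : S) : Prop :=
  ∀ l₁ l₂ : List Bool, l₁ ≠ [] → l₂ ≠ [] →
    evalPair y z l₁ = evalPair y z l₂ → l₁ = l₂

/-- `x` has infinite order: `{x, x², x³, …}` is infinite. -/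
def InfiniteOrder {S : Type*} [Monoid S] (x : S) : Prop :=
  (Set.range fun n : ℕ => x ^ (n + 1)).Infinite

/-- The length-`n` prefix of a sequence. -/
def seqTake {A : Type*} (ξ : ℕ → A) (n : ℕ) : List A := (List.range n).map ξ

/-- The `n`-th power `u^n` of a finite word. -/
def wpow {A : Type*} (u : List A) : ℕ → List A
  | 0 => []
  | n + 1 => u ++ wpow u n

/-- The eventually periodic sequence `u v v v ⋯`. -/
noncomputable def prePeriodic {A : Type*} [Nonempty A] (u v : List A) : ℕ → A :=
  fun n => if n < u.length then u.getD n (Classical.arbitrary A)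
    else v.getD ((n - u.length) % v.length) (Classical.arbitrary A)

/-- The periodic sequence `u^ω = u u u ⋯`. -/
noncomputable def periodic {A : Type*} [Nonempty A] (u : List A) : ℕ → A :=
  prePeriodic [] u

namespace Mealy

/-- The action of a word of states on a sequence: `s · ξ` is the sequence whose
length-`n` prefix is `s · (length-`n` prefix of `ξ`)`. -/
noncomputable def actSeq {Q A : Type*} [Nonempty A] (M : Mealy Q A)
    (s : List Q) (ξ : ℕ → A) : ℕ → A :=
  fun n => (M.actW s (seqTake ξ (n + 1))).getD n (Classical.arbitrary A)

/-- The language of all prefixes of the orbit of `a^ω` under `P_M`. -/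
def Lan {Q A : Type*} (M : Mealy Q A) (a : A) : Set (List A) :=
  {v | ∃ (k : ℕ) (s : List Q), v = M.actW s (List.replicate k a)}

/-- The degree of `v` in `Lan(a)`: the number of letters `b` with `v b ∈ Lan(a)`. -/
noncomputable def deg {Q A : Type*} (M : Mealy Q A) (a : A) (v : List A) : ℕ :=
  {b : A | v ++ [b] ∈ M.Lan a}.ncard

end Mealy

/-- A language is regular if it is recognized by a deterministic finite automaton. -/
def IsRegular {A : Type*} (L : Set (List A)) : Prop :=
  ∃ (σ : Type) (_ : Fintype σ) (dfa : DFA A σ), ∀ w : List A, w ∈ dfa.accepts ↔ w ∈ L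


/-!
Every state `q` permutes the finitely many words of each length, so on any finite set of words
the formal inverse `q⁻¹` acts as the power `q^(k-1)` for a common period `k > 0`. Hence each
state of `M̃` acts on words through a word of states of `M`. Since `s@u = s@v` for all `s ∈ Q*`
is preserved by the action of `Q*` (read `(st)@u = (s@(t·u))(t@u)`), it is preserved by the
action of `M̃`, and an induction on `s` over `Q ⊔ Q⁻¹` gives `s@u = s@v`. The converse holds
because `M̃` restricted to `Q` is `M`.
-/

namespace Mealy

section Action

variable {Q A : Type*} (M : Mealy Q A)

theorem actA_length (q : Q) (w : List A) : (M.actA q w).length = w.length := by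
  induction w generalizing q with
  | nil => rfl
  | cons a w ih => simp [actA, ih]

theorem stW_length (s : List Q) (w : List A) : (M.stW s w).length = s.length := by
  induction s with
  | nil => rfl
  | cons q s ih => simp [stW, ih]

theorem stW_singleton (q : Q) (w : List A) : M.stW [q] w = [M.stA q w] := rfl

theorem stW_append_states (s t : List Q) (w : List A) :
    M.stW (s ++ t) w = M.stW s (M.actW t w) ++ M.stW t w := by
  induction s with
  | nil => rfl
  | cons q s ih => simp [stW, actW_append_states, ih]

theorem actW_replicate (q : Q) (m : ℕ) (w : List A) :
    M.actW (List.replicate m q) w = (M.actA q)^[m] w := by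
  induction m with
  | zero => rfl
  | succ m ih => rw [List.replicate_succ, actW, ih, Function.iterate_succ_apply']

theorem forall_stW_actW_eq {u v : List A} (h : ∀ t : List Q, M.stW t u = M.stW t v)
    (s t : List Q) : M.stW t (M.actW s u) = M.stW t (M.actW s v) := by
  have hts := h (t ++ s)
  rw [stW_append_states, stW_append_states] at hts
  exact (List.append_inj hts (by simp only [stW_length])).1

variable {M}

theorem actA_injective (hinv : M.Invertible) (q : Q) : Function.Injective (M.actA q) := by
  intro x y hxy
  induction x generalizing q y with
  | nil => cases y <;> simp_all [actA]
  | cons a x ih =>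
    cases y with
    | nil => simp [actA] at hxy
    | cons b y =>
      simp only [actA, List.cons.injEq] at hxy
      obtain rfl : a = b := (hinv q).1 hxy.1
      exact congrArg (a :: ·) (ih (M.t q a) hxy.2)

theorem mem_periodicPts_actA [Finite A] (hinv : M.Invertible) (q : Q) (w : List A) :
    w ∈ Function.periodicPts (M.actA q) := by
  let f : {l : List A // l.length = w.length} → {l : List A // l.length = w.length} :=
    fun l => ⟨M.actA q l, (M.actA_length q l).trans l.2⟩
  have : Finite {l : List A // l.length = w.length} :=
    (List.finite_length_eq A w.length).to_subtype
  have hf : Function.Injective f := fun x y hxy =>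
    Subtype.ext (actA_injective hinv q (congrArg Subtype.val hxy))
  obtain ⟨k, hk, hper⟩ := hf.mem_periodicPts ⟨w, rfl⟩
  exact ⟨k, hk, hper.map (g := Subtype.val) fun _ => rfl⟩

theorem exists_isPeriodicPt_actA_pair [Finite A] (hinv : M.Invertible) (q : Q) (u v : List A) :
    ∃ m, Function.IsPeriodicPt (M.actA q) (m + 1) u ∧
      Function.IsPeriodicPt (M.actA q) (m + 1) v := by
  have hu := Function.minimalPeriod_pos_of_mem_periodicPts (mem_periodicPts_actA hinv q u)
  have hv := Function.minimalPeriod_pos_of_mem_periodicPts (mem_periodicPts_actA hinv q v)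
  refine ⟨Function.minimalPeriod (M.actA q) u * Function.minimalPeriod (M.actA q) v - 1, ?_⟩
  rw [Nat.sub_add_cancel (Nat.mul_pos hu hv)]
  exact ⟨(Function.isPeriodicPt_minimalPeriod _ u).mul_const _,
    (Function.isPeriodicPt_minimalPeriod _ v).const_mul _⟩

end Action

section Enriched

variable {Q A : Type*} [Nonempty A] (M : Mealy Q A)

@[simp] theorem enriched_o_inl (q : Q) (a : A) : M.enriched.o (.inl q) a = M.o q a := rfl

@[simp] theorem enriched_t_inl (q : Q) (a : A) : M.enriched.t (.inl q) a = .inl (M.t q a) := rfl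

@[simp] theorem enriched_o_inr (q : Q) (a : A) :
    M.enriched.o (.inr q) a = Function.invFun (M.o q) a := rfl

@[simp] theorem enriched_t_inr (q : Q) (a : A) :
    M.enriched.t (.inr q) a = .inr (M.t q (Function.invFun (M.o q) a)) := rfl

@[simp] theorem enriched_actA_inl (q : Q) (w : List A) :
    M.enriched.actA (.inl q) w = M.actA q w := by
  induction w generalizing q with
  | nil => rfl
  | cons a w ih => simp [actA, ih]

@[simp] theorem enriched_stA_inl (q : Q) (w : List A) :
    M.enriched.stA (.inl q) w = .inl (M.stA q w) := by
  induction w generalizing q with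
  | nil => rfl
  | cons a w ih => simp [stA, ih]

theorem enriched_stA_inr (q : Q) (w : List A) :
    M.enriched.stA (.inr q) w = .inr (M.stA q (M.enriched.actA (.inr q) w)) := by
  induction w generalizing q with
  | nil => rfl
  | cons a w ih => simp [stA, actA, ih]

theorem enriched_actW_map_inl (s : List Q) (w : List A) :
    M.enriched.actW (s.map .inl) w = M.actW s w := by
  induction s with
  | nil => rfl
  | cons q s ih => simp [actW, ih]

theorem enriched_stW_map_inl (s : List Q) (w : List A) :
    M.enriched.stW (s.map .inl) w = (M.stW s w).map .inl := by
  induction s with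
  | nil => rfl
  | cons q s ih => simp [stW, enriched_actW_map_inl, ih]

variable {M}

theorem actA_enriched_actA_inr (hinv : M.Invertible) (q : Q) (w : List A) :
    M.actA q (M.enriched.actA (.inr q) w) = w := by
  induction w generalizing q with
  | nil => rfl
  | cons a w ih => simp [actA, Function.rightInverse_invFun (hinv q).2 a, ih]

theorem enriched_actA_inr_eq_iterate (hinv : M.Invertible) {q : Q} {m : ℕ} {w : List A}
    (hw : Function.IsPeriodicPt (M.actA q) (m + 1) w) :
    M.enriched.actA (.inr q) w = (M.actA q)^[m] w := by
  apply actA_injective hinv q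
  rw [actA_enriched_actA_inr hinv, ← Function.iterate_succ_apply' (M.actA q)]
  exact hw.eq.symm

theorem exists_enriched_actA_eq_actW [Finite A] (hinv : M.Invertible) (p : Q ⊕ Q)
    (u v : List A) : ∃ r : List Q,
      M.enriched.actA p u = M.actW r u ∧ M.enriched.actA p v = M.actW r v := by
  cases p with
  | inl q => exact ⟨[q], by simp [actW]⟩
  | inr q =>
    obtain ⟨m, hu, hv⟩ := exists_isPeriodicPt_actA_pair hinv q u v
    refine ⟨List.replicate m q, ?_, ?_⟩
    · rw [actW_replicate, enriched_actA_inr_eq_iterate hinv hu]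
    · rw [actW_replicate, enriched_actA_inr_eq_iterate hinv hv]

theorem forall_stW_enriched_actW_eq [Finite A] (hinv : M.Invertible) {u v : List A}
    (h : ∀ t : List Q, M.stW t u = M.stW t v) (s : List (Q ⊕ Q)) (t : List Q) :
    M.stW t (M.enriched.actW s u) = M.stW t (M.enriched.actW s v) := by
  induction s generalizing t with
  | nil => exact h t
  | cons p s ih =>
    obtain ⟨r, hu, hv⟩ :=
      exists_enriched_actA_eq_actW hinv p (M.enriched.actW s u) (M.enriched.actW s v)
    rw [actW, actW, hu, hv]
    exact M.forall_stW_actW_eq ih r t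

theorem enriched_stA_eq [Finite A] (hinv : M.Invertible) {u v : List A}
    (h : ∀ t : List Q, M.stW t u = M.stW t v) (p : Q ⊕ Q) :
    M.enriched.stA p u = M.enriched.stA p v := by
  cases p with
  | inl q => simpa [stW_singleton] using h [q]
  | inr q =>
    have hinr := forall_stW_enriched_actW_eq hinv h [.inr q] [q]
    simp only [actW, stW_singleton, List.cons.injEq, and_true] at hinr
    rw [enriched_stA_inr, enriched_stA_inr, hinr]

end Enriched

end Mealy

theorem stmt10_general {Q A : Type*} [Fintype A] [Nonempty A]
    (M : Mealy Q A) (hinv : M.Invertible) :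
    ∀ u v : List A,
      (∀ s : List Q, M.stW s u = M.stW s v) ↔
      (∀ s : List (Q ⊕ Q), (M.enriched).stW s u = (M.enriched).stW s v) := by
  intro u v
  constructor
  · intro h s
    induction s with
    | nil => rfl
    | cons p s ih =>
      rw [Mealy.stW, Mealy.stW, ih,
        Mealy.enriched_stA_eq hinv (Mealy.forall_stW_enriched_actW_eq hinv h s)]
  · intro h s
    have hs := h (s.map .inl)
    rw [M.enriched_stW_map_inl, M.enriched_stW_map_inl] at hs
    exact List.map_injective_iff.mpr Sum.inl_injective hs

/-- For an invertible Mealy automaton `M` with enriched automaton `M̃`,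
two words `u, v ∈ A*` satisfy `s@u = s@v` for all `s ∈ Q*` iff they satisfy it for all
words `s` over `Q ⊔ Q⁻¹`; consequently `D_M = D_M̃`. -/
theorem stmt10 {Q A : Type*} [Fintype Q] [Nonempty Q] [Fintype A] [Nonempty A]
    (M : Mealy Q A) (hinv : M.Invertible) :
    ∀ u v : List A,
      (∀ s : List Q, M.stW s u = M.stW s v) ↔
      (∀ s : List (Q ⊕ Q), (M.enriched).stW s u = (M.enriched).stW s v) :=
  stmt10_general M hinv

end AutGrp
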